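/- Assume Γ is connected. Let f : ℤ[Φ/±] → ℤ[Φ/±] be a W-equivariant homomorphism of abelian groups, and for c, d ∈ Φ/± write f_d(t_c) ∈ ℤ for the coefficient of t_d in f(t_c). Suppose that: (i) for every i ∈ I, f_{[e_i]}(t_{[e_i]}) ∈ {+1, −1}; and (ii) for all distinct i, j ∈ I, f_{[e_j]}(t_{[e_i]}) = 0. Then f = id or f = −id. -/

import Mathlib

set_option linter.unusedSectionVars false

open Finset

noncomputable section

namespace ADE

variable {I : Type*} [Fintype I] [DecidableEq I]

/-- The coefficient matrix of the bilinear form attached to the graph `Γ`: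
`-2` on the diagonal, `1` for adjacent pairs of vertices, `0` otherwise. -/
def cartan (G : SimpleGraph I) [DecidableRel G.Adj] : Matrix I I ℤ :=
  Matrix.of fun i j => if i = j then -2 else if G.Adj i j then 1 else 0

/-- The symmetric bilinear form `B` on `ℤ^I` determined by
`B(e_i,e_i) = -2`, `B(e_i,e_j) = 1` for adjacent `i ≠ j`, and `0` otherwise. -/
def Bform (G : SimpleGraph I) [DecidableRel G.Adj] : LinearMap.BilinForm ℤ (I → ℤ) :=
  Matrix.toBilin' (cartan G)

/-- Negative definiteness of the induced real bilinear form on `ℝ^I`. -/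
def NegDef (G : SimpleGraph I) [DecidableRel G.Adj] : Prop :=
  ∀ v : I → ℝ, v ≠ 0 → (∑ i, ∑ j, v i * (cartan G i j : ℝ) * v j) < 0

/-- `α ∈ ℤ^I` is a root when `B(α,α) = -2`. -/
def IsRoot (G : SimpleGraph I) [DecidableRel G.Adj] (α : I → ℤ) : Prop :=
  Bform G α α = -2

variable (G : SimpleGraph I) [DecidableRel G.Adj]

lemma cartan_symm (i j : I) : cartan G i j = cartan G j i := by
  rcases eq_or_ne i j with h | h
  · subst h; rfl
  · by_cases hadj : G.Adj i j
    · simp [cartan, h, h.symm, hadj, hadj.symm]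
    · have h' : ¬ G.Adj j i := fun hc => hadj hc.symm
      simp [cartan, h, h.symm, hadj, h']

lemma Bform_apply (v w : I → ℤ) :
    Bform G v w = ∑ i, ∑ j, v i * cartan G i j * w j :=
  Matrix.toBilin'_apply _ _ _

lemma Bform_comm (v w : I → ℤ) : Bform G v w = Bform G w v := by
  rw [Bform_apply, Bform_apply, Finset.sum_comm]
  exact Finset.sum_congr rfl fun j _ => Finset.sum_congr rfl fun i _ => by
    rw [cartan_symm]; ring

lemma cartan_diag (i : I) : cartan G i i = -2 := by simp [cartan]

lemma Bform_single (i j : I) :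
    Bform G (Pi.single i 1) (Pi.single j 1) = cartan G i j := by
  rw [Bform_apply]
  simp [Pi.single_apply]

lemma Bform_single_self (i : I) :
    Bform G (Pi.single i 1) (Pi.single i 1) = -2 := by
  rw [Bform_single, cartan_diag]

/-- `IsRoot` is preserved by negation. -/
lemma isRoot_neg {α : I → ℤ} (h : IsRoot G α) : IsRoot G (-α) := by
  unfold IsRoot at h ⊢
  simpa [map_neg] using h

/-- The simple root `e_i` is a root. -/
lemma isRoot_single (i : I) : IsRoot G (Pi.single i 1) := Bform_single_self G i

/-- The reflection `s_i : v ↦ v + B(v,e_i)·e_i`. -/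
def reflect (i : I) (v : I → ℤ) : I → ℤ :=
  v + Bform G v (Pi.single i 1) • Pi.single i 1

/-- The reflection `s_i` as a linear map. -/
def reflectLM (i : I) : (I → ℤ) →ₗ[ℤ] (I → ℤ) :=
  LinearMap.id + (LinearMap.toSpanSingleton ℤ (I → ℤ) (Pi.single i 1)).comp
    ((Bform G).flip (Pi.single i 1))

lemma reflectLM_apply (i : I) (v : I → ℤ) : reflectLM G i v = reflect G i v := by
  simp [reflectLM, reflect, LinearMap.toSpanSingleton_apply]

/-- Reflections are isometries of `B`. -/
lemma Bform_reflect (i : I) (v w : I → ℤ) :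
    Bform G (reflect G i v) (reflect G i w) = Bform G v w := by
  have h1 : Bform G (Pi.single i 1) w = Bform G w (Pi.single i 1) := Bform_comm G _ _
  simp only [reflect, map_add, map_smul, LinearMap.add_apply, LinearMap.smul_apply,
    smul_eq_mul, Bform_single_self, h1]
  ring

lemma reflect_reflect (i : I) (v : I → ℤ) : reflect G i (reflect G i v) = v := by
  have h : Bform G (reflect G i v) (Pi.single i 1) = - Bform G v (Pi.single i 1) := by
    simp only [reflect, map_add, LinearMap.add_apply, map_smul, LinearMap.smul_apply,
      smul_eq_mul, Bform_single_self]
    ring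
  conv_lhs => rw [reflect, h]
  rw [reflect, neg_smul, add_neg_cancel_right]

/-- The reflection `s_i` as a linear automorphism of `ℤ^I`. -/
def reflectEquiv (i : I) : (I → ℤ) ≃ₗ[ℤ] (I → ℤ) where
  __ := reflectLM G i
  invFun := reflect G i
  left_inv := fun v => by
    show reflect G i (reflectLM G i v) = v
    rw [reflectLM_apply]; exact reflect_reflect G i v
  right_inv := fun v => by
    show reflectLM G i (reflect G i v) = v
    rw [reflectLM_apply]; exact reflect_reflect G i v

lemma reflectEquiv_apply (i : I) (v : I → ℤ) : reflectEquiv G i v = reflect G i v :=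
  reflectLM_apply G i v

/-- The Weyl group `W`: the subgroup of the group of `ℤ`-linear automorphisms
of `ℤ^I` generated by the reflections `s_i`. -/
def Weyl : Subgroup ((I → ℤ) ≃ₗ[ℤ] (I → ℤ)) :=
  Subgroup.closure (Set.range (reflectEquiv G))

lemma reflectEquiv_inv (i : I) : (reflectEquiv G i)⁻¹ = reflectEquiv G i := by
  apply LinearEquiv.toLinearMap_injective
  apply LinearMap.ext
  intro v
  have h1 : ((reflectEquiv G i)⁻¹ : (I → ℤ) ≃ₗ[ℤ] (I → ℤ)) v = (reflectEquiv G i).symm v := rfl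
  show ((reflectEquiv G i)⁻¹ : (I → ℤ) ≃ₗ[ℤ] (I → ℤ)) v = reflectEquiv G i v
  rw [h1, reflectEquiv_apply]
  rfl

lemma isRoot_reflect (i : I) {α : I → ℤ} (h : IsRoot G α) : IsRoot G (reflect G i α) := by
  unfold IsRoot at h ⊢
  rw [Bform_reflect]; exact h

/-- Every element of the Weyl group maps roots to roots. -/
lemma weyl_isRoot {w : (I → ℤ) ≃ₗ[ℤ] (I → ℤ)} (hw : w ∈ Weyl G) :
    ∀ α : I → ℤ, IsRoot G α → IsRoot G (w α) := by
  have main : (∀ α, IsRoot G α → IsRoot G (w α)) ∧ (∀ α, IsRoot G α → IsRoot G (w⁻¹ α)) := by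
    induction hw using Subgroup.closure_induction with
    | mem x hx =>
        obtain ⟨i, rfl⟩ := hx
        constructor
        · intro α hα; rw [reflectEquiv_apply]; exact isRoot_reflect G i hα
        · intro α hα; rw [reflectEquiv_inv, reflectEquiv_apply]; exact isRoot_reflect G i hα
    | one => exact ⟨fun α h => h, fun α h => by simpa using h⟩
    | mul x y hx hy ihx ihy =>
        refine ⟨fun α h => ?_, fun α h => ?_⟩
        · exact ihx.1 _ (ihy.1 _ h)
        · rw [mul_inv_rev]
          exact ihy.2 _ (ihx.2 _ h)
    | inv x hx ihx =>
        refine ⟨ihx.2, fun α h => ?_⟩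
        rw [inv_inv]
        exact ihx.1 α h
  exact main.1

/-- The type of roots. -/
def Root := {α : I → ℤ // IsRoot G α}

/-- The simple root `e_i` as an element of `Root`. -/
def simpleRoot (i : I) : Root G := ⟨Pi.single i 1, isRoot_single G i⟩

/-- Negation of a root. -/
def negRoot (α : Root G) : Root G := ⟨-α.1, isRoot_neg G α.2⟩

/-- The generator `s_i` as an element of the Weyl group. -/
def sGen (i : I) : ↥(Weyl G) := ⟨reflectEquiv G i, Subgroup.subset_closure ⟨i, rfl⟩⟩

/-- Action of a Weyl group element on roots. -/
def rootSmul (w : ↥(Weyl G)) (α : Root G) : Root G :=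
  ⟨(w : (I → ℤ) ≃ₗ[ℤ] (I → ℤ)) α.1, weyl_isRoot G w.2 α.1 α.2⟩

/-- The equivalence relation identifying a root `α` with `±α`. -/
def rootSetoid : Setoid (Root G) where
  r α β := α.1 = β.1 ∨ α.1 = -β.1
  iseqv := by
    refine ⟨fun α => Or.inl rfl, ?_, ?_⟩
    · rintro α β (h | h)
      · exact Or.inl h.symm
      · exact Or.inr (by rw [h, neg_neg])
    · rintro α β γ (h₁ | h₁) (h₂ | h₂)
      · exact Or.inl (h₁.trans h₂)
      · exact Or.inr (h₁.trans h₂)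
      · exact Or.inr (by rw [h₁, h₂])
      · exact Or.inl (by rw [h₁, h₂, neg_neg])

/-- `Φ/±`: the quotient of the set of roots by the involution `α ↦ -α`. -/
def RootMod := Quotient (rootSetoid G)

/-- The class of a root in `Φ/±`. -/
def rcls (α : Root G) : RootMod G := Quotient.mk (rootSetoid G) α

/-- The class `[e_i]` of a simple root in `Φ/±`. -/
def cls (i : I) : RootMod G := rcls G (simpleRoot G i)

/-- Action of a Weyl group element on `Φ/±`. -/
def rmodSmul (w : ↥(Weyl G)) : RootMod G → RootMod G :=
  Quotient.map (rootSmul G w) (by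
    rintro α β (h | h)
    · exact Or.inl (by simp [rootSmul, h])
    · exact Or.inr (by simp [rootSmul, h, map_neg]))

/-- The action of `w ∈ W` on `ℤΦ` (the free abelian group on the roots). -/
def wZPhi (w : ↥(Weyl G)) : (Root G →₀ ℤ) →+ (Root G →₀ ℤ) :=
  Finsupp.mapDomain.addMonoidHom (rootSmul G w)

/-- The action of `w ∈ W` on `ℤ[Φ/±]`. -/
def wZQ (w : ↥(Weyl G)) : (RootMod G →₀ ℤ) →+ (RootMod G →₀ ℤ) :=
  Finsupp.mapDomain.addMonoidHom (rmodSmul G w)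

/-- The canonical projection `π : ℤΦ → ℤ[Φ/±]`, `T_α ↦ t_{[α]}`. -/
def piHom : (Root G →₀ ℤ) →+ (RootMod G →₀ ℤ) :=
  Finsupp.mapDomain.addMonoidHom (rcls G)

/-- The action of `w ∈ W` on `ℚ ⊗ ℤΦ = (Φ →₀ ℚ)`. -/
def wZPhiQ (w : ↥(Weyl G)) : (Root G →₀ ℚ) →ₗ[ℚ] (Root G →₀ ℚ) :=
  Finsupp.lmapDomain ℚ ℚ (rootSmul G w)

/-- The action of `w ∈ W` on `ℚ ⊗ ℤ[Φ/±] = (Φ/± →₀ ℚ)`. -/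
def wZQQ (w : ↥(Weyl G)) : (RootMod G →₀ ℚ) →ₗ[ℚ] (RootMod G →₀ ℚ) :=
  Finsupp.lmapDomain ℚ ℚ (rmodSmul G w)

/-- The projection `ℚ ⊗ ℤΦ → ℚ ⊗ ℤ[Φ/±]`. -/
def piHomQ : (Root G →₀ ℚ) →ₗ[ℚ] (RootMod G →₀ ℚ) :=
  Finsupp.lmapDomain ℚ ℚ (rcls G)

/-- The subgroup `P̄ ⊂ ℤΦ` generated by the elements `T_α - T_{-α}`. -/
def Pbar : AddSubgroup (Root G →₀ ℤ) :=
  AddSubgroup.closure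
    {x | ∃ α : Root G, x = Finsupp.single α 1 - Finsupp.single (negRoot G α) 1}

end ADE

/-!
Equivariance makes the coefficient `f_d(t_c)` an invariant of the pair `(c, d)` under the
diagonal action of `W`. Every pair of classes is `W`-conjugate to a pair of classes of simple
roots: given a positive root `β` and a simple root `e_i`, a simple reflection `s_k` with
`B(β, e_k) < 0` lowers the height of `β` and fixes `[e_i]` unless `k` is adjacent to `i`, and in
that case `s_i s_k` sends `e_i` to `e_k` and still lowers the height of `β`. So by (ii) the
off-diagonal coefficients vanish, and the diagonal ones all equal `f_{[e_i]}(t_{[e_i]})`, which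
does not depend on `i` because `s_i s_k [e_i] = [e_k]` for adjacent `i, k` and `Γ` is connected.
Negative definiteness enters through `B(v, v) ≤ -2` for `v ≠ 0` (the form is even), which makes
every root positive or negative and gives `B(α, β) ≤ 1` for roots `α ≠ -β`.
-/

theorem Finsupp.addMonoidHom_eq_smul_of_single_apply {α : Type*}
    (f : (α →₀ ℤ) →+ (α →₀ ℤ)) (ε : ℤ)
    (hdiag : ∀ c, f (Finsupp.single c 1) c = ε)
    (hoff : ∀ c d, c ≠ d → f (Finsupp.single c 1) d = 0) (x : α →₀ ℤ) : f x = ε • x := by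
  have hsingle (c : α) : f (Finsupp.single c 1) = ε • Finsupp.single c 1 := by
    ext d
    rcases eq_or_ne c d with rfl | h
    · simp [hdiag]
    · simp [hoff c d h, h]
  have hf : f = ε • AddMonoidHom.id _ := Finsupp.addHom_ext fun c n => by
    rw [show Finsupp.single c n = n • Finsupp.single c 1 by simp, map_zsmul, hsingle, smul_comm]
    rfl
  rw [hf]
  rfl

namespace ADE

variable {I : Type*} [Fintype I] [DecidableEq I] {G : SimpleGraph I} [DecidableRel G.Adj]

lemma cartan_nonneg_of_ne {i j : I} (h : i ≠ j) : 0 ≤ cartan G i j := by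
  simp only [cartan, Matrix.of_apply, if_neg h]
  split_ifs <;> omega

lemma cartan_of_adj {i j : I} (h : G.Adj i j) : cartan G i j = 1 := by
  simp [cartan, h.ne, h]

variable (G) in
lemma Bform_add_self (v w : I → ℤ) :
    Bform G (v + w) (v + w) = Bform G v v + 2 * Bform G v w + Bform G w w := by
  simp only [map_add, LinearMap.add_apply, Bform_comm G w v]
  ring

variable (G) in
lemma Bform_single_self_apply (k : I) (a : ℤ) :
    Bform G (Pi.single k a) (Pi.single k a) = -2 * a * a := by
  simp [Bform_apply, Pi.single_apply, cartan_diag, mul_comm]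

variable (G) in
lemma two_dvd_Bform_self (v : I → ℤ) : 2 ∣ Bform G v v := by
  let q : (I → ℤ) →+ ZMod 2 := AddMonoidHom.mk' (fun v => (Bform G v v : ZMod 2)) fun v w => by
    rw [Bform_add_self]
    push_cast
    rw [show (2 : ZMod 2) = 0 from rfl]
    ring
  have hq : q = 0 := AddMonoidHom.functions_ext _ _ _ fun k a => by
    simp [q, Bform_single_self_apply, show (2 : ZMod 2) = 0 from rfl]
  exact_mod_cast (ZMod.intCast_zmod_eq_zero_iff_dvd _ 2).1 (DFunLike.congr_fun hq v)

lemma Bform_self_neg (hneg : NegDef G) {v : I → ℤ} (hv : v ≠ 0) : Bform G v v < 0 := by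
  have hv' : (fun i => (v i : ℝ)) ≠ 0 := fun h => hv (funext fun i => by simpa using congrFun h i)
  rw [Bform_apply]
  exact_mod_cast hneg _ hv'

lemma Bform_self_le_neg_two (hneg : NegDef G) {v : I → ℤ} (hv : v ≠ 0) : Bform G v v ≤ -2 := by
  have := Bform_self_neg hneg hv
  have := two_dvd_Bform_self G v
  omega

lemma Bform_le_one (hneg : NegDef G) {α β : I → ℤ} (hα : IsRoot G α) (hβ : IsRoot G β)
    (h : α ≠ -β) : Bform G α β ≤ 1 := by
  have := Bform_self_neg hneg (v := α + β) (by rwa [ne_eq, add_eq_zero_iff_eq_neg])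
  rw [Bform_add_self] at this
  unfold IsRoot at hα hβ
  omega

lemma isRoot_nonneg_or_nonpos (hneg : NegDef G) {α : I → ℤ} (hα : IsRoot G α) :
    0 ≤ α ∨ α ≤ 0 := by
  by_contra! h
  have hp : α⁺ ≠ 0 := fun h0 => h.2 (posPart_eq_zero.1 h0)
  have hm : α⁻ ≠ 0 := fun h0 => h.1 (negPart_eq_zero.1 h0)
  have hpm : 0 ≤ Bform G α⁺ α⁻ := by
    rw [Bform_apply]
    refine sum_nonneg fun i _ => sum_nonneg fun j _ => ?_
    rcases eq_or_ne i j with rfl | hij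
    · have : (α i)⁺ * (α i)⁻ = 0 := by
        rcases le_total 0 (α i) with hi | hi <;> simp [hi]
      simp [Pi.posPart_apply, Pi.negPart_apply, mul_right_comm _ (cartan G i i), this]
    · exact mul_nonneg (mul_nonneg (posPart_nonneg _) (cartan_nonneg_of_ne hij)) (negPart_nonneg _)
  have hsplit := Bform_add_self G α⁺ (-α⁻)
  rw [← sub_eq_add_neg, posPart_sub_negPart] at hsplit
  simp only [map_neg, LinearMap.neg_apply, neg_neg] at hsplit
  have := Bform_self_le_neg_two hneg hp
  have := Bform_self_le_neg_two hneg hm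
  unfold IsRoot at hα
  omega

lemma ne_zero_of_isRoot {α : I → ℤ} (hα : IsRoot G α) : α ≠ 0 := by
  rintro rfl
  simp [IsRoot] at hα

variable (G) in
lemma Bform_eq_sum_mul_Bform_single (v w : I → ℤ) :
    Bform G v w = ∑ k, w k * Bform G v (Pi.single k 1) := by
  simp only [Bform_apply, Pi.single_apply, mul_ite, mul_one, mul_zero, sum_ite_eq', mem_univ,
    if_true, mul_sum]
  rw [sum_comm]
  exact sum_congr rfl fun i _ => sum_congr rfl fun j _ => by ring

lemma exists_Bform_single_neg {α : I → ℤ} (hα : IsRoot G α) (hpos : 0 ≤ α) :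
    ∃ k, Bform G α (Pi.single k 1) < 0 := by
  by_contra! h
  have := Bform_eq_sum_mul_Bform_single G α α
  have := sum_nonneg fun k (_ : k ∈ univ) => mul_nonneg (hpos k) (h k)
  unfold IsRoot at hα
  omega

lemma eq_single_of_isRoot_of_nonneg {α : I → ℤ} {k : I} (hα : IsRoot G α) (hpos : 0 ≤ α)
    (hsupp : ∀ j, j ≠ k → α j = 0) : α = Pi.single k 1 := by
  have hα_eq : α = Pi.single k (α k) := by
    funext j
    rcases eq_or_ne j k with rfl | hj
    · simp
    · simp [hj, hsupp j hj]
  have hsq : α k * α k = 1 := by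
    have h := Bform_single_self_apply G k (α k)
    rw [← hα_eq] at h
    unfold IsRoot at hα
    linarith
  rcases mul_self_eq_one_iff.1 hsq with h | h
  · rwa [h] at hα_eq
  · linarith [show 0 ≤ α k from hpos k]

variable (G) in
lemma reflect_apply_of_ne (k : I) (v : I → ℤ) {j : I} (hj : j ≠ k) : reflect G k v j = v j := by
  simp [reflect, hj]

lemma reflect_nonneg (hneg : NegDef G) {α : I → ℤ} {k : I} (hα : IsRoot G α) (hpos : 0 ≤ α)
    (hne : α ≠ Pi.single k 1) : 0 ≤ reflect G k α := by
  refine (isRoot_nonneg_or_nonpos hneg (isRoot_reflect G k hα)).resolve_right fun h => hne ?_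
  refine eq_single_of_isRoot_of_nonneg hα hpos fun j hj => le_antisymm ?_ (hpos j)
  simpa [reflect_apply_of_ne G k α hj] using h j

def height (v : I → ℤ) : ℤ := ∑ i, v i

lemma height_nonneg {v : I → ℤ} (hv : 0 ≤ v) : 0 ≤ height v :=
  sum_nonneg fun i _ => hv i

variable (G) in
lemma height_reflect (k : I) (v : I → ℤ) :
    height (reflect G k v) = height v + Bform G v (Pi.single k 1) := by
  simp [height, reflect, sum_add_distrib, Pi.single_apply]

variable (G) in
lemma reflect_single_of_not_adj {i k : I} (h : ¬ G.Adj i k) :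
    reflect G k (Pi.single i 1) = Pi.single i 1 ∨ reflect G k (Pi.single i 1) = -Pi.single i 1 := by
  rcases eq_or_ne i k with rfl | hik
  · right
    rw [reflect, Bform_single_self]
    module
  · left
    simp [reflect, Bform_single, cartan, hik, h]

lemma reflect_single_of_adj {i k : I} (h : G.Adj i k) :
    reflect G k (Pi.single i 1) = Pi.single i 1 + Pi.single k 1 := by
  rw [reflect, Bform_single, cartan_of_adj h, one_smul]

lemma reflect_reflect_single_of_adj {i k : I} (h : G.Adj i k) :
    reflect G i (reflect G k (Pi.single i 1)) = Pi.single k 1 := by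
  rw [reflect_single_of_adj h, reflect, map_add, LinearMap.add_apply, Bform_single_self,
    Bform_single, cartan_of_adj h.symm]
  module

instance : MulAction (Weyl G) (RootMod G) where
  smul := rmodSmul G
  one_smul c := Quotient.inductionOn c fun _ => rfl
  mul_smul _ _ c := Quotient.inductionOn c fun _ => rfl

lemma smul_rcls (w : Weyl G) (α : Root G) : w • rcls G α = rcls G (rootSmul G w α) := rfl

lemma sGen_smul_cls_of_not_adj {i k : I} (h : ¬ G.Adj i k) : sGen G k • cls G i = cls G i := by
  refine Quotient.sound ?_
  show reflectEquiv G k (Pi.single i 1) = _ ∨ reflectEquiv G k (Pi.single i 1) = _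
  rw [reflectEquiv_apply]
  exact reflect_single_of_not_adj G h

lemma smul_cls_of_adj {i k : I} (h : G.Adj i k) : (sGen G i * sGen G k) • cls G i = cls G k := by
  refine congrArg (rcls G) (Subtype.ext ?_)
  show reflectEquiv G i (reflectEquiv G k (Pi.single i 1)) = Pi.single k 1
  rw [reflectEquiv_apply, reflectEquiv_apply, reflect_reflect_single_of_adj h]

lemma exists_smul_height_lt (hneg : NegDef G) (i : I) (β : Root G) (hβ : 0 ≤ β.1)
    (hns : ∀ k, β.1 ≠ Pi.single k 1) :
    ∃ (u : Weyl G) (i' : I), u • cls G i = cls G i' ∧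
      0 ≤ (rootSmul G u β).1 ∧ height (rootSmul G u β).1 < height β.1 := by
  by_cases h : ∃ k, Bform G β.1 (Pi.single k 1) < 0 ∧ ¬ G.Adj i k
  · obtain ⟨k, hk, hik⟩ := h
    refine ⟨sGen G k, i, sGen_smul_cls_of_not_adj hik, reflect_nonneg hneg β.2 hβ (hns k), ?_⟩
    show height (reflect G k β.1) < _
    rw [height_reflect]
    omega
  push Not at h
  obtain ⟨k, hk⟩ := exists_Bform_single_neg β.2 hβ
  have hik := h k hk
  have hi : 0 ≤ Bform G β.1 (Pi.single i 1) := not_lt.1 fun hi => G.irrefl (h i hi)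
  have hne : reflect G k β.1 ≠ Pi.single i 1 := by
    intro heq
    have hβ_eq : β.1 = Pi.single i 1 + Pi.single k 1 := by
      rw [← reflect_single_of_adj hik, ← heq, reflect_reflect]
    rw [hβ_eq, map_add, LinearMap.add_apply, Bform_single_self, Bform_single,
      cartan_of_adj hik.symm] at hi
    omega
  have hβi : β.1 ≠ -Pi.single i 1 := fun heq => by simpa [heq] using hβ i
  have hle := Bform_le_one hneg β.2 (isRoot_single G i) hβi
  refine ⟨sGen G i * sGen G k, k, smul_cls_of_adj hik,
    reflect_nonneg hneg (isRoot_reflect G k β.2) (reflect_nonneg hneg β.2 hβ (hns k)) hne, ?_⟩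
  show height (reflect G i (reflect G k β.1)) < _
  -- `height (s_i s_k β) = height β + 2 B(β, e_k) + B(β, e_i)`
  rw [height_reflect, height_reflect, reflect, map_add, map_smul, LinearMap.add_apply,
    LinearMap.smul_apply, Bform_single, cartan_of_adj hik.symm, smul_eq_mul]
  omega

lemma exists_smul_cls_pair_of_nonneg (hneg : NegDef G) (i : I) (β : Root G) (hβ : 0 ≤ β.1) :
    ∃ (w : Weyl G) (j k : I), w • cls G i = cls G j ∧ w • rcls G β = cls G k := by
  by_cases hs : ∃ k, β.1 = Pi.single k 1
  · obtain ⟨k, hk⟩ := hs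
    exact ⟨1, i, k, one_smul _ _, by rw [one_smul]; exact congrArg (rcls G) (Subtype.ext hk)⟩
  push Not at hs
  obtain ⟨u, i', hu, hβ', hlt⟩ := exists_smul_height_lt hneg i β hβ hs
  obtain ⟨w, j, k, hj, hk⟩ := exists_smul_cls_pair_of_nonneg hneg i' (rootSmul G u β) hβ'
  exact ⟨w * u, j, k, by rw [mul_smul, hu, hj], by rw [mul_smul, smul_rcls, hk]⟩
termination_by (height β.1).toNat
decreasing_by exact (Int.toNat_lt_toNat (hlt.trans_le' (height_nonneg hβ'))).2 hlt

lemma exists_nonneg_rcls_eq (hneg : NegDef G) (c : RootMod G) :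
    ∃ α : Root G, 0 ≤ α.1 ∧ rcls G α = c := by
  obtain ⟨α, rfl⟩ := Quotient.exists_rep c
  rcases isRoot_nonneg_or_nonpos hneg α.2 with h | h
  · exact ⟨α, h, rfl⟩
  · exact ⟨negRoot G α, neg_nonneg.2 h, Quotient.sound (Or.inr rfl)⟩

lemma exists_smul_eq_cls (hneg : NegDef G) (c : RootMod G) :
    ∃ (w : Weyl G) (k : I), w • c = cls G k := by
  obtain ⟨α, hα, rfl⟩ := exists_nonneg_rcls_eq hneg c
  obtain ⟨i, -⟩ := Function.ne_iff.1 (ne_zero_of_isRoot α.2)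
  obtain ⟨w, -, k, -, hk⟩ := exists_smul_cls_pair_of_nonneg hneg i α hα
  exact ⟨w, k, hk⟩

lemma exists_smul_eq_cls_pair (hneg : NegDef G) (c d : RootMod G) :
    ∃ (w : Weyl G) (j k : I), w • c = cls G j ∧ w • d = cls G k := by
  obtain ⟨w₁, i, hi⟩ := exists_smul_eq_cls hneg c
  obtain ⟨β, hβ, hβd⟩ := exists_nonneg_rcls_eq hneg (w₁ • d)
  obtain ⟨w₂, j, k, hj, hk⟩ := exists_smul_cls_pair_of_nonneg hneg i β hβ
  exact ⟨w₂ * w₁, j, k, by rw [mul_smul, hi, hj], by rw [mul_smul, ← hβd, hk]⟩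

lemma exists_smul_cls_eq_of_reachable {i j : I} (h : G.Reachable i j) :
    ∃ w : Weyl G, w • cls G i = cls G j := by
  obtain ⟨p⟩ := h
  induction p with
  | nil => exact ⟨1, one_smul _ _⟩
  | cons hadj _ ih =>
    obtain ⟨w, hw⟩ := ih
    exact ⟨w * (sGen G _ * sGen G _), by rw [mul_smul, smul_cls_of_adj hadj, hw]⟩

lemma apply_single_smul_eq_of_equivariant {f : (RootMod G →₀ ℤ) →+ (RootMod G →₀ ℤ)}
    (hequiv : ∀ (w : Weyl G) (x : RootMod G →₀ ℤ), f (wZQ G w x) = wZQ G w (f x))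
    (w : Weyl G) (c d : RootMod G) :
    f (Finsupp.single (w • c) 1) (w • d) = f (Finsupp.single c 1) d := by
  have hw : wZQ G w (Finsupp.single c 1) = Finsupp.single (w • c) 1 := Finsupp.mapDomain_single
  rw [← hw, hequiv]
  exact Finsupp.mapDomain_apply (MulAction.injective w) _ _

end ADE

open ADE

variable {I : Type*} [Fintype I] [DecidableEq I]

/-- a `W`-equivariant endomorphism of `ℤ[Φ/±]` whose matrix entries on the
classes of simple roots are `±1` on the diagonal and `0` off the diagonal is `± id`. -/
theorem equivariant_endomorphism_eq_pm_id
    (G : SimpleGraph I) [DecidableRel G.Adj] (hconn : G.Connected) (hneg : NegDef G)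
    (f : (RootMod G →₀ ℤ) →+ (RootMod G →₀ ℤ))
    (hequiv : ∀ (w : ↥(Weyl G)) (x : RootMod G →₀ ℤ), f (wZQ G w x) = wZQ G w (f x))
    (hdiag : ∀ i : I, f (Finsupp.single (cls G i) 1) (cls G i) = 1 ∨
                      f (Finsupp.single (cls G i) 1) (cls G i) = -1)
    (hoff : ∀ i j : I, i ≠ j → f (Finsupp.single (cls G i) 1) (cls G j) = 0) :
    (∀ x, f x = x) ∨ (∀ x, f x = -x) := by
  obtain ⟨i₀⟩ := hconn.nonempty
  have hcoeff := apply_single_smul_eq_of_equivariant hequiv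
  have hdiag' (c : RootMod G) :
      f (Finsupp.single c 1) c = f (Finsupp.single (cls G i₀) 1) (cls G i₀) := by
    obtain ⟨w, j, hj⟩ := exists_smul_eq_cls hneg c
    obtain ⟨u, hu⟩ := exists_smul_cls_eq_of_reachable (hconn j i₀)
    rw [← hcoeff w, hj, ← hcoeff u, hu]
  have hoff' (c d : RootMod G) (hcd : c ≠ d) : f (Finsupp.single c 1) d = 0 := by
    obtain ⟨w, j, k, hj, hk⟩ := exists_smul_eq_cls_pair hneg c d
    rw [← hcoeff w, hj, hk]
    exact hoff j k fun h => hcd (smul_left_cancel w (by rw [hj, hk, h]))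
  have hf := Finsupp.addMonoidHom_eq_smul_of_single_apply f _ hdiag' hoff'
  rcases hdiag i₀ with h | h
  · exact Or.inl fun x => by rw [hf, h, one_smul]
  · exact Or.inr fun x => by rw [hf, h, neg_one_smul]
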